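/- Let X be a compact metric space and f_{0,∞} an equicontinuous sequence of continuous self-maps (i.e., the family {f_p^i : p ≥ 0, i in any fixed finite range} is uniformly equicontinuous). If the topological entropy h(f_{0,∞}) > 0, then the supremum topological sequence entropy h*(f_{0,∞}) = sup_{A} h_A(f_{0,∞}) is infinite. -/

import Mathlib

open Filter Set MeasureTheory

/-- `nacomp f i n = f (i+n-1) ∘ ⋯ ∘ f i`, the `n`-fold composition of the
nonautonomous system starting at index `i`. -/
def nacomp {X : Type*} (f : ℕ → X → X) (i : ℕ) : ℕ → X → X
  | 0 => id
  | n + 1 => f (i + n) ∘ nacomp f i n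

/-- `E` is an `(n, ε, A)`-separated subset of `Λ` for the nonautonomous system `f`. -/
def IsSepSet {X : Type*} [PseudoMetricSpace X] (f : ℕ → X → X) (A : ℕ → ℕ) (n : ℕ)
    (ε : ℝ) (Λ : Set X) (E : Finset X) : Prop :=
  ↑E ⊆ Λ ∧ ∀ x ∈ E, ∀ y ∈ E, x ≠ y →
    ∃ j : Fin n, ε < dist (nacomp f 0 (A j) x) (nacomp f 0 (A j) y)

/-- `s_n(ε, A, f, Λ)`: maximal cardinality of an `(n,ε,A)`-separated subset of `Λ`. -/
noncomputable def maxSep {X : Type*} [PseudoMetricSpace X] (f : ℕ → X → X) (A : ℕ → ℕ)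
    (n : ℕ) (ε : ℝ) (Λ : Set X) : ℕ :=
  sSup {m | ∃ E : Finset X, IsSepSet f A n ε Λ E ∧ E.card = m}

/-- Topological sequence entropy of `f` on `Λ` along `A`, via separated sets:
`lim_{ε → 0} limsup_n (1/n) log s_n(ε,A,f,Λ)`, the limit realized as a supremum over `ε > 0`. -/
noncomputable def sepEnt {X : Type*} [PseudoMetricSpace X] (f : ℕ → X → X) (A : ℕ → ℕ)
    (Λ : Set X) : EReal :=
  ⨆ ε : {ε : ℝ // 0 < ε},
    limsup (fun n : ℕ => ((Real.log (maxSep f A n ε Λ) / n : ℝ) : EReal)) atTop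

/-- A finite open cover of the whole space. -/
def IsFinOpenCover {X : Type*} [TopologicalSpace X] (𝒜 : Finset (Set X)) : Prop :=
  (∀ u ∈ 𝒜, IsOpen u) ∧ ⋃₀ ↑𝒜 = (univ : Set X)

/-- A cell `⋂_j (f_0^{a_j})⁻¹ (u j)` of the join `⋁_{j} f_0^{-a_j} 𝒜`. -/
def seqCell {X : Type*} (f : ℕ → X → X) (A : ℕ → ℕ) (n : ℕ) (u : Fin n → Set X) : Set X :=
  ⋂ j : Fin n, nacomp f 0 (A j.1) ⁻¹' (u j)

/-- `N((⋁_{j=1}^n f_0^{-a_j} 𝒜)|_Λ)`: the minimal cardinality of a subfamily of the join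
cover whose union contains `Λ`. -/
noncomputable def coverN {X : Type*} (f : ℕ → X → X) (A : ℕ → ℕ) (n : ℕ) (Λ : Set X)
    (𝒜 : Finset (Set X)) : ℕ :=
  sInf {m | ∃ S : Finset (Fin n → Set X), (∀ u ∈ S, ∀ j, u j ∈ 𝒜) ∧
    (Λ ⊆ ⋃ u ∈ S, seqCell f A n u) ∧ S.card = m}

/-- `h_A(f, Λ, 𝒜)`, the sequence entropy of `f` on `Λ` relative to the open cover `𝒜`. -/
noncomputable def coverEntOf {X : Type*} (f : ℕ → X → X) (A : ℕ → ℕ) (Λ : Set X)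
    (𝒜 : Finset (Set X)) : EReal :=
  limsup (fun n : ℕ => ((Real.log (coverN f A n Λ 𝒜) / n : ℝ) : EReal)) atTop

/-- `h_A(f, Λ)`: topological sequence entropy via open covers. -/
noncomputable def coverEnt {X : Type*} [TopologicalSpace X] (f : ℕ → X → X) (A : ℕ → ℕ)
    (Λ : Set X) : EReal :=
  ⨆ 𝒜 : {𝒜 : Finset (Set X) // IsFinOpenCover 𝒜}, coverEntOf f A Λ 𝒜

/-- The supremum topological sequence entropy `h*(f) = sup_A h_A(f)`. -/
noncomputable def supSeqEnt {X : Type*} [PseudoMetricSpace X] (f : ℕ → X → X) : EReal :=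
  ⨆ A : {A : ℕ → ℕ // StrictMono A}, sepEnt f A univ

/-- The `n`-th compositions system `f_{0,∞}^n`, whose `k`-th map is `f_{kn}^n`. -/
def compSys {X : Type*} (f : ℕ → X → X) (n : ℕ) : ℕ → X → X :=
  fun k => nacomp f (k * n) n

/-- A finite measurable partition of the space. -/
def IsFinMeasPartition {X : Type*} [MeasurableSpace X] (P : Finset (Set X)) : Prop :=
  (∀ s ∈ P, MeasurableSet s) ∧ ((P : Set (Set X)).PairwiseDisjoint id) ∧
    ⋃₀ ↑P = (univ : Set X)

/-- `h_{A,μ}(f, P) = limsup (1/n) H_μ(⋁_{j=1}^n f_0^{-a_j} P)`. -/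
noncomputable def measSeqEntPart {X : Type*} [MeasurableSpace X] (μ : Measure X)
    (f : ℕ → X → X) (A : ℕ → ℕ) (P : Finset (Set X)) : EReal :=
  limsup (fun n : ℕ =>
    (((∑ u : Fin n → {s // s ∈ P},
        Real.negMulLog (μ (seqCell f A n (fun j => (u j : Set X)))).toReal) / n : ℝ) : EReal))
    atTop

/-- The measure-theoretic sequence entropy `h_{A,μ}(f)`. -/
noncomputable def measSeqEnt {X : Type*} [MeasurableSpace X] (μ : Measure X)
    (f : ℕ → X → X) (A : ℕ → ℕ) : EReal :=
  ⨆ P : {P : Finset (Set X) // IsFinMeasPartition P}, measSeqEntPart μ f A P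

/-- Covering dimension at most `d`: every finite open cover has a finite open refinement
of order at most `d + 1`. -/
def HasCovDimLE (X : Type*) [TopologicalSpace X] (d : ℕ) : Prop :=
  ∀ 𝒜 : Finset (Set X), IsFinOpenCover 𝒜 → ∃ ℬ : Finset (Set X), IsFinOpenCover ℬ ∧
    (∀ v ∈ ℬ, ∃ u ∈ 𝒜, v ⊆ u) ∧ ∀ x : X, ({v : Set X | v ∈ ℬ ∧ x ∈ v}).ncard ≤ d + 1

/-- The induced nonautonomous system `f̂` on the space of Borel probability measures,
carrying the Lévy–Prokhorov (Prohorov) metric: `f̂ n μ = (f n)_* μ`. -/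
noncomputable def inducedSys {X : Type*} [MeasurableSpace X] (f : ℕ → X → X)
    (hf : ∀ n, Measurable (f n)) :
    ℕ → LevyProkhorov (ProbabilityMeasure X) → LevyProkhorov (ProbabilityMeasure X) :=
  fun n μ => (LevyProkhorov.toMeasureEquiv (α := ProbabilityMeasure X)).symm
    (((LevyProkhorov.toMeasureEquiv (α := ProbabilityMeasure X)) μ).map (hf n).aemeasurable)

/-- Multi-sensitivity of a nonautonomous system. -/
def MultiSensitive {X : Type*} [PseudoMetricSpace X] (f : ℕ → X → X) : Prop :=
  ∃ δ : ℝ, 0 < δ ∧ ∀ (k : ℕ) (V : Fin k → Set X),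
    (∀ i, IsOpen (V i)) → (∀ i, (V i).Nonempty) →
      ∃ n : ℕ, 1 ≤ n ∧ ∀ i, δ < Metric.diam (nacomp f 0 n '' V i)

/-!
Split the time range `1, …, m n` into `m` blocks of length `n`. Uniform equicontinuity of the
compositions of at most `n` consecutive maps turns an `ε`-separation at some time into a
`δ`-separation at the start of its block, so an `(m n, ε)`-separated set along `1, 2, 3, …` is
`(m, δ)`-separated along `0, n, 2n, …`. Hence positive entropy `c` along `ℕ` forces entropy at
least `c n / 2` along `nℕ`, and `n` is arbitrary.
-/

open scoped NNReal ENNReal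

lemma le_limsup_log_div_of_frequently {a b : ℕ → ℕ} {c : ℝ} (hc : 0 < c) {n : ℕ} (hn : 0 < n)
    (ha : ∃ᶠ t in atTop, c * t < Real.log (a t)) (hab : ∀ t m, t ≤ m * n → a t ≤ b m) :
    ((c * n / 2 : ℝ) : EReal) ≤ limsup (fun m : ℕ => ((Real.log (b m) / m : ℝ) : EReal)) atTop := by
  have hblocks : Tendsto (fun t => t / n + 1) atTop atTop :=
    tendsto_atTop_mono (fun _ => Nat.le_succ _) (Nat.tendsto_div_const_atTop hn.ne')
  refine le_limsup_of_frequently_le <| hblocks.frequently <|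
    (ha.and_eventually (eventually_ge_atTop n)).mono fun t ⟨hlog, htn⟩ => ?_
  have hq : 1 ≤ t / n := (Nat.one_le_div_iff hn).2 htn
  have hqt : (n : ℝ) * (t / n : ℕ) ≤ t := by exact_mod_cast Nat.mul_div_le t n
  have hat : 1 < (a t : ℝ) := by
    refine (Real.log_pos_iff (Nat.cast_nonneg _)).1 (lt_of_le_of_lt ?_ hlog)
    positivity
  have hab' : (a t : ℝ) ≤ b (t / n + 1) := by
    exact_mod_cast hab _ _ ((Nat.lt_mul_div_succ t hn).le.trans_eq (Nat.mul_comm _ _))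
  rw [EReal.coe_le_coe_iff, le_div_iff₀ (by positivity)]
  calc c * n / 2 * ((t / n + 1 : ℕ) : ℝ) ≤ c * (n * (t / n : ℕ)) := by
        have : (1 : ℝ) ≤ (t / n : ℕ) := by exact_mod_cast hq
        push_cast
        nlinarith [mul_pos hc (Nat.cast_pos.2 hn)]
    _ ≤ c * t := by gcongr
    _ ≤ Real.log (a t) := hlog.le
    _ ≤ Real.log (b (t / n + 1)) := Real.log_le_log (by linarith) hab'

lemma nacomp_add {X : Type*} (f : ℕ → X → X) (i s t : ℕ) :
    nacomp f i (s + t) = nacomp f (i + s) t ∘ nacomp f i s := by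
  induction t with
  | zero => rfl
  | succ t ih =>
    show f (i + (s + t)) ∘ nacomp f i (s + t) = _
    rw [ih, ← Nat.add_assoc]
    rfl

section Equicontinuity

variable {X : Type*} [UniformSpace X] {f : ℕ → X → X}

lemma uniformEquicontinuous_nacomp (hf : UniformEquicontinuous f) (r : ℕ) :
    UniformEquicontinuous fun i => nacomp f i r := by
  induction r with
  | zero => exact fun U hU => mem_of_superset hU fun _ h _ => h
  | succ r ih =>
    intro U hU
    filter_upwards [ih _ (hf U hU)] with xy h i using h i (i + r)

lemma uniformEquicontinuous_nacomp_fin (hf : UniformEquicontinuous f) (n : ℕ) :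
    UniformEquicontinuous fun p : ℕ × Fin (n + 1) => nacomp f p.1 p.2 := by
  intro U hU
  filter_upwards [eventually_all.2 fun r : Fin (n + 1) => uniformEquicontinuous_nacomp hf r U hU]
    with xy h p using h p.2 p.1

end Equicontinuity

lemma Metric.packingNumber_univ_ne_top {X : Type*} [PseudoEMetricSpace X] [CompactSpace X]
    {ε : ℝ≥0} (hε : ε ≠ 0) :
    Metric.packingNumber ε (univ : Set X) ≠ ⊤ := by
  obtain ⟨N, -, hN, hcover⟩ :=
    Metric.exists_finite_isCover_of_isCompact (by simpa using hε) (isCompact_univ (X := X))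
      (ε := ε / 2)
  refine ne_top_of_le_ne_top hN.encard_lt_top.ne ?_
  calc Metric.packingNumber ε univ = Metric.packingNumber (2 * (ε / 2)) univ := by
        rw [mul_div_cancel₀ _ two_ne_zero]
    _ ≤ Metric.externalCoveringNumber (ε / 2) univ :=
        Metric.packingNumber_two_mul_le_externalCoveringNumber _ _
    _ ≤ N.encard := hcover.externalCoveringNumber_le_encard

section Separation

variable {X : Type*} [PseudoMetricSpace X] {f : ℕ → X → X}

lemma isSepSet_empty (f : ℕ → X → X) (A : ℕ → ℕ) (n : ℕ) (ε : ℝ) (Λ : Set X) :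
    IsSepSet f A n ε Λ ∅ :=
  ⟨by simp, by simp⟩

lemma maxSep_le_maxSep {A B : ℕ → ℕ} {n m : ℕ} {ε δ : ℝ} {Λ : Set X}
    (hbdd : BddAbove {k | ∃ E : Finset X, IsSepSet f B m δ Λ E ∧ E.card = k})
    (h : ∀ E, IsSepSet f A n ε Λ E → IsSepSet f B m δ Λ E) :
    maxSep f A n ε Λ ≤ maxSep f B m δ Λ :=
  csSup_le_csSup hbdd ⟨0, ∅, isSepSet_empty f A n ε Λ, rfl⟩
    fun _ ⟨E, hE, hk⟩ => ⟨E, h E hE, hk⟩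

lemma bddAbove_card_isSepSet [CompactSpace X] (f : ℕ → X → X) (A : ℕ → ℕ) (n : ℕ) {ε : ℝ}
    (hε : 0 < ε) (Λ : Set X) :
    BddAbove {k | ∃ E : Finset X, IsSepSet f A n ε Λ E ∧ E.card = k} := by
  set Φ : X → Fin n → X := fun x j => nacomp f 0 (A j) x
  refine ⟨(Metric.packingNumber ε.toNNReal (univ : Set (Fin n → X))).toNat, ?_⟩
  rintro _ ⟨E, hE, rfl⟩
  have hinj : InjOn Φ E := by
    intro x hx y hy hxy
    by_contra hne
    obtain ⟨j, hj⟩ := hE.2 x hx y hy hne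
    have hxyj : nacomp f 0 (A j) x = nacomp f 0 (A j) y := congrFun hxy j
    rw [hxyj, dist_self] at hj
    exact lt_asymm hε hj
  have hsep : Metric.IsSeparated (ε.toNNReal : ℝ≥0∞) (Φ '' E) := by
    rintro _ ⟨x, hx, rfl⟩ _ ⟨y, hy, rfl⟩ hne
    obtain ⟨j, hj⟩ := hE.2 x hx y hy (ne_of_apply_ne Φ hne)
    rw [edist_dist, ← ENNReal.ofReal]
    have hd : ε < dist (Φ x) (Φ y) := hj.trans_le (dist_le_pi_dist (Φ x) (Φ y) j)
    exact (ENNReal.ofReal_lt_ofReal_iff (hε.trans hd)).2 hd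
  have hcard : (E.card : ℕ∞) ≤ Metric.packingNumber ε.toNNReal (univ : Set (Fin n → X)) := by
    rw [← Set.encard_coe_eq_coe_finsetCard, ← hinj.encard_image]
    exact hsep.encard_le_packingNumber (subset_univ _)
  simpa using ENat.toNat_le_toNat hcard
    (Metric.packingNumber_univ_ne_top (Real.toNNReal_pos.2 hε).ne')

lemma exists_isSepSet_mul_of_isSepSet_succ (hf : UniformEquicontinuous f) {n : ℕ} (hn : 0 < n)
    {ε : ℝ} (hε : 0 < ε) :
    ∃ δ > 0, ∀ {t m : ℕ}, t ≤ m * n → ∀ {Λ : Set X} {E : Finset X},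
      IsSepSet f (· + 1) t ε Λ E → IsSepSet f (· * n) m δ Λ E := by
  obtain ⟨δ, hδ, hclose⟩ :=
    Metric.uniformEquicontinuous_iff.1 (uniformEquicontinuous_nacomp_fin hf n) ε hε
  refine ⟨δ / 2, half_pos hδ, fun {t m} htm {Λ E} hE => ⟨hE.1, fun x hx y hy hxy => ?_⟩⟩
  obtain ⟨j, hj⟩ := hE.2 x hx y hy hxy
  by_contra! hnear
  -- time `j + 1` lies `j % n + 1 ≤ n` steps after the block start `(j / n) * n < m * n`
  have hblock : j / n < m :=
    Nat.div_lt_of_lt_mul (lt_of_lt_of_le j.2 (htm.trans_eq (Nat.mul_comm m n)))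
  have hsplit :
      nacomp f 0 (j + 1) = nacomp f (j / n * n) (j % n + 1) ∘ nacomp f 0 (j / n * n) := by
    have h := nacomp_add f 0 (j / n * n) (j % n + 1)
    rwa [Nat.zero_add, ← Nat.add_assoc, Nat.div_add_mod'] at h
  have hlt := hclose _ _ ((hnear ⟨j / n, hblock⟩).trans_lt (half_lt_self hδ))
    (j / n * n, ⟨j % n + 1, Nat.succ_lt_succ (Nat.mod_lt _ hn)⟩)
  simp only [hsplit] at hj
  exact lt_asymm hj hlt

lemma exists_maxSep_succ_le_maxSep_mul [CompactSpace X] (hf : UniformEquicontinuous f) {n : ℕ}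
    (hn : 0 < n) {ε : ℝ} (hε : 0 < ε) :
    ∃ δ > 0, ∀ t m : ℕ, t ≤ m * n →
      maxSep f (· + 1) t ε univ ≤ maxSep f (· * n) m δ univ := by
  obtain ⟨δ, hδ, htransfer⟩ := exists_isSepSet_mul_of_isSepSet_succ hf hn hε
  exact ⟨δ, hδ, fun t m htm =>
    maxSep_le_maxSep (bddAbove_card_isSepSet f _ m hδ univ) fun _ => htransfer htm⟩

lemma exists_frequently_mul_lt_log_maxSep {A : ℕ → ℕ} {Λ : Set X} (h : 0 < sepEnt f A Λ) :
    ∃ ε > 0, ∃ c > 0, ∃ᶠ t : ℕ in atTop, c * t < Real.log (maxSep f A t ε Λ) := by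
  obtain ⟨⟨ε, hε⟩, hL⟩ := lt_iSup_iff.1 h
  obtain ⟨c, hc, hcL⟩ := EReal.lt_iff_exists_real_btwn.1 hL
  refine ⟨ε, hε, c, EReal.coe_pos.1 hc, ?_⟩
  refine ((frequently_lt_of_lt_limsup (by isBoundedDefault) hcL).and_eventually
    (eventually_gt_atTop 0)).mono fun t ⟨hct, ht⟩ => ?_
  exact (lt_div_iff₀ (Nat.cast_pos.2 ht)).1 (EReal.coe_lt_coe_iff.1 hct)

lemma limsup_le_sepEnt (A : ℕ → ℕ) (Λ : Set X) {ε : ℝ} (hε : 0 < ε) :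
    limsup (fun n : ℕ => ((Real.log (maxSep f A n ε Λ) / n : ℝ) : EReal)) atTop ≤
      sepEnt f A Λ :=
  le_iSup (fun ε : {ε : ℝ // 0 < ε} =>
    limsup (fun n : ℕ => ((Real.log (maxSep f A n ε Λ) / n : ℝ) : EReal)) atTop) ⟨ε, hε⟩

lemma sepEnt_le_supSeqEnt {A : ℕ → ℕ} (hA : StrictMono A) : sepEnt f A univ ≤ supSeqEnt f :=
  le_iSup (fun A : {A : ℕ → ℕ // StrictMono A} => sepEnt f A univ) ⟨A, hA⟩

end Separation

theorem supSeqEnt_top_of_pos_ent_general {X : Type*} [MetricSpace X] [CompactSpace X]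
    (f : ℕ → X → X) (hequi : Equicontinuous f)
    (hpos : 0 < sepEnt f (fun i => i + 1) univ) :
    supSeqEnt f = ⊤ := by
  obtain ⟨ε, hε, c, hc, hfreq⟩ := exists_frequently_mul_lt_log_maxSep hpos
  have hbound (n : ℕ) (hn : 0 < n) : ((c * n / 2 : ℝ) : EReal) ≤ supSeqEnt f := by
    obtain ⟨δ, hδ, hle⟩ := exists_maxSep_succ_le_maxSep_mul
      (CompactSpace.uniformEquicontinuous_of_equicontinuous hequi) hn hε
    calc ((c * n / 2 : ℝ) : EReal)
        ≤ limsup (fun m : ℕ => ((Real.log (maxSep f (· * n) m δ univ) / m : ℝ) : EReal)) atTop :=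
          le_limsup_log_div_of_frequently hc hn hfreq hle
      _ ≤ sepEnt f (· * n) univ := limsup_le_sepEnt _ _ hδ
      _ ≤ supSeqEnt f := sepEnt_le_supSeqEnt (strictMono_mul_right_of_pos hn)
  refine (EReal.eq_top_iff_forall_lt _).2 fun y => ?_
  obtain ⟨n, hn⟩ := exists_nat_gt (2 * y / c)
  refine lt_of_lt_of_le (EReal.coe_lt_coe_iff.2 ?_) (hbound (n + 1) n.succ_pos)
  rw [div_lt_iff₀ hc] at hn
  push_cast
  linarith

/-- For an equicontinuous nonautonomous system, positive topological entropy implies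
infinite supremum topological sequence entropy. -/
theorem supSeqEnt_top_of_pos_ent {X : Type*} [MetricSpace X] [CompactSpace X]
    (f : ℕ → X → X) (hf : ∀ n, Continuous (f n)) (hequi : Equicontinuous f)
    (hpos : 0 < sepEnt f (fun i => i + 1) univ) :
    supSeqEnt f = ⊤ :=
  supSeqEnt_top_of_pos_ent_general f hequi hpos
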